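/- arXiv:1803.07085 — 7 statements merged into one kernel-verified Lean document; each statement's English description precedes it below -/
import Mathlib

section
/- Let $H_\Lambda > 0$ and $\bar{a} > 0$, and let $a : \mathbb{R} \to (0,\infty)$ be a continuous function satisfying $\lim_{t \to -\infty} a(t) e^{-H_\Lambda t} = \bar{a}$. Fix $t_f \in \mathbb{R}$. Then $\lim_{t \to -\infty} a(t) \int_{t}^{t_f} \frac{ds}{a(s)} = \frac{1}{H_\Lambda}$. (Equivalently, along the past boundary the product $a \cdot r$ of the scale factor and comoving radius along a radial null ray converges to $1/H_\Lambda$, so the induced boundary metric is $-2\,d\lambda\,dv + H_\Lambda^{-2} d\Omega^2$.) -/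
open Real Filter MeasureTheory Set intervalIntegral Asymptotics

/-!
Since `a t ~ abar * exp (HΛ * t)` as `t → -∞` and `∫_t^tf ds / a s` diverges there, this
integral is asymptotically equivalent to the same integral for the exact de Sitter scale factor
`abar * exp (HΛ * s)`: the contribution of any fixed final segment is negligible. For the
de Sitter factor the product is `(1 - exp (HΛ * (t - tf))) / HΛ`, which tends to `1 / HΛ`.
-/

theorem MeasureTheory.LocallyIntegrable.intervalIntegrable {E : Type*} [NormedAddCommGroup E]
    {f : ℝ → E} (hf : LocallyIntegrable f) (u v : ℝ) : IntervalIntegrable f volume u v :=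
  (hf.integrableOn_isCompact isCompact_uIcc).intervalIntegrable

section IntegralAsymptotics

variable {E : Type*} [NormedAddCommGroup E] [NormedSpace ℝ E] {g : ℝ → ℝ} {c : ℝ}

theorem Asymptotics.IsLittleO.intervalIntegral_atBot {f : ℝ → E} (hf : LocallyIntegrable f)
    (hg : LocallyIntegrable g) (hfg : f =o[atBot] g) (hg_nonneg : ∀ᶠ s in atBot, 0 ≤ g s)
    (hG : Tendsto (fun t => ∫ s in t..c, g s) atBot atTop) :
    (fun t => ∫ s in t..c, f s) =o[atBot] fun t => ∫ s in t..c, g s := by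
  refine IsLittleO.of_bound fun ε hε => ?_
  obtain ⟨T, hT⟩ := eventually_atBot.1 ((hfg.bound (half_pos hε)).and hg_nonneg)
  -- past this threshold, the fixed pieces over `[T, c]` are absorbed by `ε / 2 * ∫_t^c g`
  filter_upwards [eventually_le_atBot T, hG.eventually_ge_atTop
      ((‖∫ s in T..c, f s‖ + ε / 2 * |∫ s in T..c, g s|) / (ε / 2))] with t htT hGt
  have hhead : ‖∫ s in t..T, f s‖ ≤ ε / 2 * ∫ s in t..T, g s := by
    rw [← intervalIntegral.integral_const_mul]
    refine norm_integral_le_of_norm_le htT (ae_of_all _ fun s hs => ?_)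
      ((hg.intervalIntegrable t T).const_mul _)
    obtain ⟨hfs, hgs⟩ := hT s hs.2
    rwa [Real.norm_of_nonneg hgs] at hfs
  rw [div_le_iff₀' (half_pos hε)] at hGt
  have hG_nonneg : 0 ≤ ∫ s in t..c, g s :=
    (mul_nonneg_iff_of_pos_left (half_pos hε)).1 (le_trans (by positivity) hGt)
  rw [← integral_add_adjacent_intervals (hf.intervalIntegrable t T) (hf.intervalIntegrable T c),
    Real.norm_of_nonneg hG_nonneg]
  rw [← integral_add_adjacent_intervals (hg.intervalIntegrable t T) (hg.intervalIntegrable T c)]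
    at hGt ⊢
  have := mul_le_mul_of_nonneg_left (neg_abs_le (∫ s in T..c, g s)) (half_pos hε).le
  linarith [norm_add_le (∫ s in t..T, f s) (∫ s in T..c, f s)]

theorem Asymptotics.IsEquivalent.intervalIntegral_atBot {f : ℝ → ℝ} (hf : LocallyIntegrable f)
    (hg : LocallyIntegrable g) (hfg : f ~[atBot] g) (hg_nonneg : ∀ᶠ s in atBot, 0 ≤ g s)
    (hG : Tendsto (fun t => ∫ s in t..c, g s) atBot atTop) :
    (fun t => ∫ s in t..c, f s) ~[atBot] fun t => ∫ s in t..c, g s := by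
  refine (hfg.isLittleO.intervalIntegral_atBot (hf.sub hg) hg hg_nonneg hG).congr_left
    fun t => ?_
  exact integral_sub (hf.intervalIntegrable t c) (hg.intervalIntegrable t c)

end IntegralAsymptotics

section DeSitter

variable {A H : ℝ}

theorem integral_one_div_mul_exp (hA : A ≠ 0) (hH : H ≠ 0) (t c : ℝ) :
    ∫ s in t..c, 1 / (A * exp (H * s)) = (exp (-(H * t)) - exp (-(H * c))) / (A * H) := by
  have hderiv : ∀ s ∈ uIcc t c,
      HasDerivAt (fun s => exp (-H * s) / -(A * H)) (1 / (A * exp (H * s))) s := by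
    intro s _
    refine (((hasDerivAt_id' s).const_mul (-H)).exp.div_const (-(A * H))).congr_deriv ?_
    rw [neg_mul, exp_neg]
    field_simp
  have hcont : Continuous fun s => 1 / (A * exp (H * s)) :=
    continuous_const.div (by fun_prop) fun s => mul_ne_zero hA (exp_pos _).ne'
  rw [integral_eq_sub_of_hasDerivAt hderiv (hcont.intervalIntegrable t c)]
  simp only [neg_mul]
  ring

theorem tendsto_integral_one_div_mul_exp_atBot (hA : 0 < A) (hH : 0 < H) (c : ℝ) :
    Tendsto (fun t => ∫ s in t..c, 1 / (A * exp (H * s))) atBot atTop := by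
  simp only [integral_one_div_mul_exp hA.ne' hH.ne']
  refine Tendsto.atTop_div_const (mul_pos hA hH) (tendsto_atTop_add_const_right _ _ ?_)
  exact tendsto_exp_atTop.comp (tendsto_neg_atBot_atTop.comp (tendsto_id.const_mul_atBot hH))

theorem tendsto_mul_exp_mul_integral_one_div_mul_exp_atBot (hA : A ≠ 0) (hH : 0 < H) (c : ℝ) :
    Tendsto (fun t => A * exp (H * t) * ∫ s in t..c, 1 / (A * exp (H * s))) atBot
      (nhds (1 / H)) := by
  have hexp : Tendsto (fun t => exp (H * t)) atBot (nhds 0) :=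
    tendsto_exp_atBot.comp (tendsto_id.const_mul_atBot hH)
  have hlim := ((hexp.mul_const (exp (-(H * c)))).const_sub 1).div_const H
  rw [zero_mul, sub_zero] at hlim
  refine hlim.congr fun t => ?_
  rw [integral_one_div_mul_exp hA hH.ne', exp_neg, exp_neg]
  field_simp

end DeSitter

/-- For an asymptotically de Sitter scale factor (continuous, positive,
with `a t * exp (-HΛ t) → abar` as `t → -∞`) and any fixed `tf`, the product of the
scale factor and the comoving radius along a radial null ray,
`a t * ∫_t^{tf} ds / a s`, converges to `1 / HΛ` as `t → -∞`. -/
theorem stmt_1 (HΛ abar : ℝ) (hHΛ : 0 < HΛ) (habar : 0 < abar)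
    (a : ℝ → ℝ) (ha_cont : Continuous a) (ha_pos : ∀ t, 0 < a t)
    (ha_lim : Tendsto (fun t => a t * Real.exp (-HΛ * t)) atBot (nhds abar))
    (tf : ℝ) :
    Tendsto (fun t => a t * ∫ s in t..tf, 1 / a s) atBot (nhds (1 / HΛ)) := by
  set φ : ℝ → ℝ := fun t => abar * exp (HΛ * t)
  have ha_equiv : a ~[atBot] φ := by
    refine isEquivalent_of_tendsto_one ?_
    have := ha_lim.div_const abar
    rw [div_self habar.ne'] at this
    refine this.congr fun t => ?_
    simp only [φ, Pi.div_apply, neg_mul, exp_neg]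
    field_simp
  have hinv_equiv : (fun s => 1 / a s) ~[atBot] fun s => 1 / φ s :=
    IsEquivalent.refl.div ha_equiv
  have hint_equiv : (fun t => ∫ s in t..tf, 1 / a s) ~[atBot] fun t => ∫ s in t..tf, 1 / φ s :=
    hinv_equiv.intervalIntegral_atBot
      (continuous_const.div ha_cont fun s => (ha_pos s).ne').locallyIntegrable
      (continuous_const.div (by fun_prop) fun s =>
        (mul_pos habar (exp_pos _)).ne').locallyIntegrable
      (Eventually.of_forall fun s => by positivity)
      (tendsto_integral_one_div_mul_exp_atBot habar hHΛ tf)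
  exact (ha_equiv.mul hint_equiv).symm.tendsto_nhds
    (tendsto_mul_exp_mul_integral_one_div_mul_exp_atBot habar.ne' hHΛ tf)
end

section
/- Let $H_\Lambda > 0$, $\bar{a} > 0$ and let $a(t) = \dfrac{\bar{a}}{e^{H_\Lambda t} + e^{-H_\Lambda t}}$, with Hubble parameter $H(t) = a'(t)/a(t)$. Then for all $t \in \mathbb{R}$, $\dfrac{H'(t)}{a(t)^2} = -\dfrac{4 H_\Lambda^2}{\bar{a}^2}$. In particular $\dot{H}/a^2$ converges as $t \to -\infty$, so the past boundary of this spacetime is not a parallely propagated curvature singularity. -/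
open Real Filter Set

/-!
The denominator is `2 cosh (HΛ t)`, so `H = -HΛ tanh (HΛ t)` and `H' = -HΛ² / cosh² (HΛ t)`, while
`a² = abar² / (4 cosh² (HΛ t))`: the factors `cosh²` cancel and `H'/a²` is the constant `-4 HΛ²/abar²`.
-/

theorem Real.hasDerivAt_tanh (x : ℝ) : HasDerivAt tanh (cosh x ^ 2)⁻¹ x := by
  have h := (hasDerivAt_sinh x).div (hasDerivAt_cosh x) (cosh_pos x).ne'
  rw [show sinh / cosh = tanh from funext fun y => (tanh_eq_sinh_div_cosh y).symm] at h
  refine h.congr_deriv ?_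
  rw [← sq, ← sq, cosh_sq_sub_sinh_sq, one_div]

theorem exp_mul_add_exp_neg_mul (k t : ℝ) : exp (k * t) + exp (-k * t) = 2 * cosh (k * t) := by
  rw [cosh_eq, neg_mul]; ring

theorem logDeriv_div_two_cosh_mul {c : ℝ} (hc : c ≠ 0) (k : ℝ) :
    logDeriv (fun t => c / (2 * cosh (k * t))) = fun t => -k * tanh (k * t) := by
  funext t
  have hcosh : DifferentiableAt ℝ (fun t => cosh (k * t)) t := by fun_prop
  rw [logDeriv_div t hc (by positivity) (differentiableAt_const c) (hcosh.const_mul 2),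
    logDeriv_const, logDeriv_const_mul t 2 two_ne_zero,
    show (fun t => cosh (k * t)) = cosh ∘ (k * ·) from rfl,
    logDeriv_comp (differentiable_cosh _) (by fun_prop), logDeriv_cosh, deriv_const_mul_field',
    deriv_id'', Pi.zero_apply]
  ring

theorem hasDerivAt_neg_mul_tanh_mul (k t : ℝ) :
    HasDerivAt (fun t => -k * tanh (k * t)) (-k ^ 2 / cosh (k * t) ^ 2) t := by
  refine (((hasDerivAt_tanh (k * t)).comp t ((hasDerivAt_id t).const_mul k)).const_mul
    (-k)).congr_deriv ?_
  rw [mul_one]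
  ring

theorem stmt_8_general (HΛ abar : ℝ) (habar : 0 < abar)
    (a H : ℝ → ℝ)
    (ha : a = fun t => abar / (Real.exp (HΛ * t) + Real.exp (-HΛ * t)))
    (hHdef : H = fun t => deriv a t / a t) :
    (∀ t, deriv H t / a t ^ 2 = -(4 * HΛ ^ 2 / abar ^ 2)) ∧
    Tendsto (fun t => deriv H t / a t ^ 2) atBot (nhds (-(4 * HΛ ^ 2 / abar ^ 2))) := by
  have ha_cosh : a = fun t => abar / (2 * cosh (HΛ * t)) := by
    simp only [ha, exp_mul_add_exp_neg_mul]
  have hH : H = fun t => -HΛ * tanh (HΛ * t) := by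
    rw [← logDeriv_div_two_cosh_mul habar.ne' HΛ, ← ha_cosh, hHdef]
    rfl
  have hconst : ∀ t, deriv H t / a t ^ 2 = -(4 * HΛ ^ 2 / abar ^ 2) := by
    intro t
    rw [hH, (hasDerivAt_neg_mul_tanh_mul HΛ t).deriv, ha_cosh]
    field_simp
    ring
  refine ⟨hconst, ?_⟩
  simp_rw [hconst]
  exact tendsto_const_nhds

/-- For the extendible toy model `a t = abar / (e^{HΛ t} + e^{-HΛ t})`
with Hubble parameter `H = a'/a`, one has `H' t / a t ^ 2 = -4 HΛ^2 / abar^2` for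
all `t`; in particular `H'/a^2` converges as `t → -∞`, so the past boundary is not
a parallely propagated curvature singularity. -/
theorem stmt_8 (HΛ abar : ℝ) (hHΛ : 0 < HΛ) (habar : 0 < abar)
    (a H : ℝ → ℝ)
    (ha : a = fun t => abar / (Real.exp (HΛ * t) + Real.exp (-HΛ * t)))
    (hHdef : H = fun t => deriv a t / a t) :
    (∀ t, deriv H t / a t ^ 2 = -(4 * HΛ ^ 2 / abar ^ 2)) ∧
    Tendsto (fun t => deriv H t / a t ^ 2) atBot (nhds (-(4 * HΛ ^ 2 / abar ^ 2))) :=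
  stmt_8_general HΛ abar habar a H ha hHdef
end

section
/- Let $H_\Lambda > 0$, $\bar{a} > 0$, let $a(t) = \dfrac{\bar{a}}{e^{H_\Lambda t} + e^{-H_\Lambda t}}$, and let $\eta(t) = \dfrac{e^{H_\Lambda t} - e^{-H_\Lambda t}}{\bar{a} H_\Lambda}$ and $\lambda(t) = \dfrac{\bar{a}}{H_\Lambda} \arctan(e^{H_\Lambda t})$. Then: (i) $\eta'(t) = 1/a(t)$ for all $t$ (so $\eta$ is the conformal time), and $\eta$ maps $\mathbb{R}$ bijectively onto $\mathbb{R}$; (ii) for all $t$, $a(t)\,\eta(t) = -\dfrac{1}{H_\Lambda} \cos\!\Big(\dfrac{2 H_\Lambda \lambda(t)}{\bar{a}}\Big)$. -/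
open Real Filter Set

/-!
In terms of hyperbolic functions, `a t = ā / (2 cosh (H t))` and `η t = 2 sinh (H t) / (ā H)`,
so `η' = 1 / a` and `η` inherits bijectivity from `sinh`, while `a η = tanh (H t) / H`.
Since `λ t = (ā / H) arctan (e^{H t})`, (ii) becomes the identity
`cos (2 arctan (e^x)) = (1 - e^{2x}) / (1 + e^{2x}) = -tanh x`.
-/

namespace Real

theorem cos_two_mul_arctan (x : ℝ) : cos (2 * arctan x) = (1 - x ^ 2) / (1 + x ^ 2) := by
  rw [cos_two_mul, cos_sq_arctan]
  field_simp
  ring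

theorem cos_two_mul_arctan_exp (x : ℝ) : cos (2 * arctan (exp x)) = -tanh x := by
  rw [cos_two_mul_arctan, tanh_eq, exp_neg]
  field_simp
  ring

theorem exp_sub_exp_neg (x : ℝ) : exp x - exp (-x) = 2 * sinh x := by
  rw [sinh_eq]; ring

theorem exp_add_exp_neg (x : ℝ) : exp x + exp (-x) = 2 * cosh x := by
  rw [cosh_eq]; ring

theorem hasDerivAt_const_mul_sinh_mul (c k t : ℝ) :
    HasDerivAt (fun t => c * sinh (k * t)) (c * (cosh (k * t) * k)) t := by
  simpa using (((hasDerivAt_id t).const_mul k).sinh).const_mul c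

theorem bijective_const_mul_sinh_mul {c k : ℝ} (hc : c ≠ 0) (hk : k ≠ 0) :
    Function.Bijective fun t => c * sinh (k * t) :=
  (Equiv.mulLeft₀ c hc).bijective.comp (sinh_bijective.comp (Equiv.mulLeft₀ k hk).bijective)

end Real

/-- For the extendible toy model `a t = abar / (e^{HΛ t} + e^{-HΛ t})`,
with `eta t = (e^{HΛ t} - e^{-HΛ t}) / (abar HΛ)` and
`lam t = (abar/HΛ) arctan (e^{HΛ t})`:
(i) `eta' = 1 / a` (so `eta` is the conformal time) and `eta` is a bijection of `ℝ`
onto `ℝ`; (ii) `a t * eta t = -(1/HΛ) cos (2 HΛ lam t / abar)` for all `t`. -/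
theorem stmt_10 (HΛ abar : ℝ) (hHΛ : 0 < HΛ) (habar : 0 < abar)
    (a eta lam : ℝ → ℝ)
    (ha : a = fun t => abar / (Real.exp (HΛ * t) + Real.exp (-HΛ * t)))
    (heta : eta = fun t => (Real.exp (HΛ * t) - Real.exp (-HΛ * t)) / (abar * HΛ))
    (hlam : lam = fun t => abar / HΛ * Real.arctan (Real.exp (HΛ * t))) :
    (∀ t, HasDerivAt eta (1 / a t) t) ∧
    Function.Bijective eta ∧
    (∀ t, a t * eta t = -(1 / HΛ) * Real.cos (2 * HΛ * lam t / abar)) := by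
  have ha' : a = fun t => abar / (2 * cosh (HΛ * t)) := by
    simp only [ha, neg_mul, exp_add_exp_neg]
  have heta' : eta = fun t => 2 / (abar * HΛ) * sinh (HΛ * t) := by
    funext t
    simp only [heta, neg_mul, exp_sub_exp_neg]
    ring
  have hlam' (t : ℝ) : 2 * HΛ * lam t / abar = 2 * arctan (exp (HΛ * t)) := by
    simp only [hlam]
    field_simp
  refine ⟨fun t => ?_, ?_, fun t => ?_⟩
  · rw [heta']
    convert hasDerivAt_const_mul_sinh_mul _ HΛ t using 1
    simp only [ha']
    field_simp
  · rw [heta']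
    exact bijective_const_mul_sinh_mul (by positivity) hHΛ.ne'
  · rw [hlam', cos_two_mul_arctan_exp, ha', heta', tanh_eq_sinh_div_cosh]
    field_simp
end

section
/- Let $M > 0$, $w \in \mathbb{R}$, let $I \subseteq \mathbb{R}$ be an interval, and let $a : I \to (0,\infty)$ be differentiable with Hubble parameter $H = a'/a$, and $\rho : I \to (0,\infty)$ differentiable. Suppose the continuity equation $\rho'(t) = -3(1+w) H(t) \rho(t)$ and the Friedmann equation $H'(t) = -\dfrac{(1+w)\rho(t)}{2M^2}$ hold on $I$. Then: (i) $\rho(t)\, a(t)^{3(1+w)}$ is constant on $I$, equal to some $C > 0$; (ii) $\dfrac{H'(t)}{a(t)^2} = -\dfrac{(1+w) C}{2 M^2}\, a(t)^{-(5 + 3w)}$; and (iii) the function $x \mapsto \dfrac{(1+w) C}{2M^2} x^{-(5+3w)}$ on $(0,\infty)$ has a finite limit as $x \to 0^+$ if and only if $w = -1$ or $w \leq -5/3$. -/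
open Real Filter Set Topology

/-!
The continuity equation says exactly that `ρ a^{3(1+w)}` has zero derivative, so it is a positive
constant `C` on the interval. Substituting `ρ = C a^{-3(1+w)}` into the Friedmann equation gives
`H' / a² = -((1+w) C / 2M²) a^{-(5+3w)}`. Finally `c x^p` has a finite limit at `0⁺` iff `c = 0` or
`p ≥ 0`: for `p < 0` and a limit `L`, the constant `c = (c x^p) x^{-p}` would tend to `L · 0 = 0`.
-/

theorem Convex.is_const_of_hasDerivAt_eq_zero {s : Set ℝ} (hs : Convex ℝ s) {f : ℝ → ℝ}
    (hf : ∀ x ∈ s, HasDerivAt f 0 x) {x y : ℝ} (hx : x ∈ s) (hy : y ∈ s) : f x = f y := by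
  have h := hs.norm_image_sub_le_of_norm_hasDerivWithin_le (C := 0)
    (fun z hz => (hf z hz).hasDerivWithinAt) (fun _ _ => by simp) hy hx
  rw [zero_mul, norm_le_zero_iff, sub_eq_zero] at h
  exact h

theorem hasDerivAt_mul_rpow_eq_zero {a ρ : ℝ → ℝ} {t h k : ℝ} (hat : 0 < a t)
    (ha : HasDerivAt a (h * a t) t) (hρ : HasDerivAt ρ (-k * h * ρ t) t) :
    HasDerivAt (fun s => ρ s * a s ^ k) 0 t := by
  refine (hρ.mul (ha.rpow_const (p := k) (Or.inl hat.ne'))).congr_deriv ?_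
  rw [rpow_sub_one hat.ne']
  field_simp
  ring

theorem div_sq_eq_mul_rpow_of_mul_rpow_eq {x y c C w : ℝ} (hx : 0 < x)
    (hC : y * x ^ (3 * (1 + w)) = C) : c * y / x ^ 2 = c * C * x ^ (-(5 + 3 * w)) := by
  have hpow : x ^ (3 * (1 + w)) * x ^ (-(5 + 3 * w)) = (x ^ 2)⁻¹ := by
    rw [← rpow_add hx, show 3 * (1 + w) + -(5 + 3 * w) = -(2 : ℕ) by ring, rpow_neg hx.le,
      rpow_natCast]
  rw [← hC, mul_assoc c, mul_assoc y, hpow]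
  ring

theorem exists_tendsto_const_mul_rpow_nhdsGT_zero_iff (c p : ℝ) :
    (∃ L : ℝ, Tendsto (fun x : ℝ => c * x ^ p) (𝓝[>] 0) (𝓝 L)) ↔ c = 0 ∨ 0 ≤ p := by
  constructor
  · rintro ⟨L, hL⟩
    by_contra! hcp
    have hpow : Tendsto (fun x : ℝ => x ^ (-p)) (𝓝[>] 0) (𝓝 0) := by
      simpa [zero_rpow (neg_pos.2 hcp.2).ne'] using
        (continuousAt_rpow_const 0 (-p) (Or.inr (neg_pos.2 hcp.2).le)).tendsto.mono_left
          nhdsWithin_le_nhds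
    have hc : Tendsto (fun _ : ℝ => c) (𝓝[>] 0) (𝓝 0) := by
      refine (mul_zero L ▸ hL.mul hpow).congr' ?_
      filter_upwards [self_mem_nhdsWithin] with x (hx : 0 < x)
      rw [mul_assoc, ← rpow_add hx, add_neg_cancel, rpow_zero, mul_one]
    exact hcp.1 (tendsto_nhds_unique tendsto_const_nhds hc)
  · rintro (rfl | hp)
    · exact ⟨0, by simp⟩
    · exact ⟨_, ((continuousAt_rpow_const 0 p (Or.inr hp)).tendsto.const_mul c).mono_left
        nhdsWithin_le_nhds⟩

theorem stmt_11_general (M w : ℝ) (hM : 0 < M) (I : Set ℝ) (hI : I.OrdConnected)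
    (a H H' ρ : ℝ → ℝ)
    (ha_pos : ∀ t ∈ I, 0 < a t) (hρ_pos : ∀ t ∈ I, 0 < ρ t)
    (ha : ∀ t ∈ I, HasDerivAt a (H t * a t) t)
    (hcont : ∀ t ∈ I, HasDerivAt ρ (-3 * (1 + w) * H t * ρ t) t)
    (hFried : ∀ t ∈ I, H' t = -((1 + w) * ρ t) / (2 * M ^ 2)) :
    ∃ C : ℝ, 0 < C ∧
      (∀ t ∈ I, ρ t * a t ^ (3 * (1 + w)) = C) ∧
      (∀ t ∈ I, H' t / a t ^ 2 = -((1 + w) * C) / (2 * M ^ 2) * a t ^ (-(5 + 3 * w))) ∧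
      ((∃ L : ℝ, Tendsto (fun x : ℝ => (1 + w) * C / (2 * M ^ 2) * x ^ (-(5 + 3 * w)))
          (nhdsWithin 0 (Ioi 0)) (nhds L)) ↔ (w = -1 ∨ w ≤ -5 / 3)) := by
  have hlim : ∀ C : ℝ, 0 < C →
      ((∃ L : ℝ, Tendsto (fun x : ℝ => (1 + w) * C / (2 * M ^ 2) * x ^ (-(5 + 3 * w)))
          (𝓝[>] 0) (𝓝 L)) ↔ (w = -1 ∨ w ≤ -5 / 3)) := fun C hC => by
    rw [exists_tendsto_const_mul_rpow_nhdsGT_zero_iff, div_eq_zero_iff, mul_eq_zero,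
      or_iff_left (pow_ne_zero 2 hM.ne' |> mul_ne_zero two_ne_zero), or_iff_left hC.ne']
    exact or_congr (by constructor <;> intro <;> linarith) (by constructor <;> intro <;> linarith)
  rcases I.eq_empty_or_nonempty with rfl | ⟨t₀, ht₀⟩
  · exact ⟨1, one_pos, by simp, by simp, hlim 1 one_pos⟩
  have hconst : ∀ t ∈ I, ρ t * a t ^ (3 * (1 + w)) = ρ t₀ * a t₀ ^ (3 * (1 + w)) :=
    fun t ht => hI.convex.is_const_of_hasDerivAt_eq_zero
      (fun s hs => hasDerivAt_mul_rpow_eq_zero (ha_pos s hs) (ha s hs)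
        ((hcont s hs).congr_deriv (by ring))) ht ht₀
  have hC : 0 < ρ t₀ * a t₀ ^ (3 * (1 + w)) :=
    mul_pos (hρ_pos t₀ ht₀) (rpow_pos_of_pos (ha_pos t₀ ht₀) _)
  refine ⟨_, hC, hconst, fun t ht => ?_, hlim _ hC⟩
  rw [hFried t ht, neg_div, neg_div, neg_div, neg_mul, neg_inj, mul_div_right_comm,
    mul_div_right_comm (1 + w)]
  exact div_sq_eq_mul_rpow_of_mul_rpow_eq (ha_pos t ht) (hconst t ht)

/-- For a perfect fluid with equation of state `P = w ρ` in flat FLRW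
spacetime (continuity equation `ρ' = -3(1+w) H ρ`, Friedmann equation
`H' = -(1+w) ρ / (2 M²)`, `H = a'/a`) on an interval `I`:
(i) `ρ a^{3(1+w)}` is constant on `I`, equal to some `C > 0`;
(ii) `H' / a² = -((1+w) C / (2 M²)) a^{-(5+3w)}` on `I`;
(iii) the function `x ↦ ((1+w) C / (2 M²)) x^{-(5+3w)}` on `(0,∞)` has a finite
limit as `x → 0⁺` if and only if `w = -1` or `w ≤ -5/3`. -/
theorem stmt_11 (M w : ℝ) (hM : 0 < M) (I : Set ℝ) (hI : I.OrdConnected)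
    (a H H' ρ : ℝ → ℝ)
    (ha_pos : ∀ t ∈ I, 0 < a t) (hρ_pos : ∀ t ∈ I, 0 < ρ t)
    (ha : ∀ t ∈ I, HasDerivAt a (H t * a t) t)
    (hcont : ∀ t ∈ I, HasDerivAt ρ (-3 * (1 + w) * H t * ρ t) t)
    (hHd : ∀ t ∈ I, HasDerivAt H (H' t) t)
    (hFried : ∀ t ∈ I, H' t = -((1 + w) * ρ t) / (2 * M ^ 2)) :
    ∃ C : ℝ, 0 < C ∧
      (∀ t ∈ I, ρ t * a t ^ (3 * (1 + w)) = C) ∧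
      (∀ t ∈ I, H' t / a t ^ 2 = -((1 + w) * C) / (2 * M ^ 2) * a t ^ (-(5 + 3 * w))) ∧
      ((∃ L : ℝ, Tendsto (fun x : ℝ => (1 + w) * C / (2 * M ^ 2) * x ^ (-(5 + 3 * w)))
          (nhdsWithin 0 (Ioi 0)) (nhds L)) ↔ (w = -1 ∨ w ≤ -5 / 3)) :=
  stmt_11_general M w hM I hI a H H' ρ ha_pos hρ_pos ha hcont hFried
end

section
/- Let $M, m > 0$ and $\varphi_e > 0$. Define the Starobinsky potential $V(\varphi) = \dfrac{3}{4} m^2 M^2 \big(1 - e^{-\sqrt{2/3}\,\varphi/M}\big)^2$ for $\varphi > 0$, the e-folding number $\mathcal{N}(\varphi) = \dfrac{1}{M^2}\int_{\varphi_e}^{\varphi} \dfrac{V(\psi)}{V'(\psi)}\, d\psi$, and $f(\varphi) = \dfrac{V'(\varphi)^2}{V(\varphi)}\, e^{2\mathcal{N}(\varphi)}$. Then $\lim_{\varphi \to \infty} f(\varphi) = +\infty$. (Hence the Starobinsky inflationary spacetime has a $C^0$ parallely propagated curvature singularity at its past boundary.) -/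
/-!
With `c = √(2/3)/M` the potential is `V = A (1 - e^{-cφ})²`, for which `V/V' = (e^{cφ} - 1)/(2c)`
exactly. So `2N` grows like `e^{cφ}/(c²M²)`, while the prefactor `V'²/V = 4Ac² e^{-2cφ}` decays
only exponentially: `f = 4Ac² exp(e^{cφ}/(c²M²) - O(φ)) → ∞`.
-/

open Real Filter intervalIntegral

noncomputable def starobinskyPot (A c : ℝ) (φ : ℝ) : ℝ :=
  A * (1 - exp (-(c * φ))) ^ 2

namespace starobinskyPot

variable {A c : ℝ}

theorem hasDerivAt (x : ℝ) :
    HasDerivAt (starobinskyPot A c)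
      (2 * A * c * exp (-(c * x)) * (1 - exp (-(c * x)))) x := by
  have hlin : HasDerivAt (fun φ : ℝ => -(c * φ)) (-c) x := by
    simpa using (hasDerivAt_id x).const_mul (-c)
  refine (((hasDerivAt_const x 1).fun_sub hlin.exp).pow 2 |>.const_mul A).congr_deriv ?_
  ring

theorem deriv_eq (x : ℝ) :
    deriv (starobinskyPot A c) x = 2 * A * c * exp (-(c * x)) * (1 - exp (-(c * x))) :=
  (hasDerivAt x).deriv

/-- This holds also at `x = 0`, where both sides vanish (the left one as `0 / 0`). -/
theorem div_deriv (hA : A ≠ 0) (hc : c ≠ 0) (x : ℝ) :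
    starobinskyPot A c x / deriv (starobinskyPot A c) x = (exp (c * x) - 1) / (2 * c) := by
  rw [deriv_eq, starobinskyPot]
  by_cases hx : x = 0
  · simp [hx]
  have hu : 1 - exp (-(c * x)) ≠ 0 := by
    rw [sub_ne_zero, ne_comm, Ne, exp_eq_one_iff]
    simp [hc, hx]
  rw [exp_neg]
  field_simp

theorem integral_div_deriv (hA : A ≠ 0) (hc : c ≠ 0) (a b : ℝ) :
    ∫ ψ in a..b, starobinskyPot A c ψ / deriv (starobinskyPot A c) ψ =
      (exp (c * b) - exp (c * a)) / (2 * c ^ 2) - (b - a) / (2 * c) := by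
  simp_rw [div_deriv hA hc]
  have hF : ∀ ψ, HasDerivAt (fun ψ => (exp (c * ψ) / c - ψ) / (2 * c))
      ((exp (c * ψ) - 1) / (2 * c)) ψ := fun ψ => by
    have hexp := ((hasDerivAt_id ψ).const_mul c).exp
    refine ((hexp.div_const c).sub (hasDerivAt_id ψ)).div_const (2 * c) |>.congr_deriv ?_
    simp [field]
  rw [integral_eq_sub_of_hasDerivAt (fun ψ _ => hF ψ)
    ((by fun_prop : Continuous fun ψ => (exp (c * ψ) - 1) / (2 * c)).intervalIntegrable _ _)]
  field_simp
  ring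

theorem deriv_sq_div (hA : A ≠ 0) {x : ℝ} (hx : c * x ≠ 0) :
    deriv (starobinskyPot A c) x ^ 2 / starobinskyPot A c x =
      4 * A * c ^ 2 * exp (-(2 * c * x)) := by
  have hu : 1 - exp (-(c * x)) ≠ 0 := by
    rw [sub_ne_zero, ne_comm, Ne, exp_eq_one_iff, neg_eq_zero]
    exact hx
  rw [deriv_eq, starobinskyPot, show -(2 * c * x) = -(c * x) + -(c * x) by ring, exp_add]
  field_simp
  ring

end starobinskyPot

theorem tendsto_mul_exp_sub_mul_add_atTop {p c : ℝ} (hp : 0 < p) (hc : 0 < c) (q r : ℝ) :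
    Tendsto (fun x => p * exp (c * x) - q * x + r) atTop atTop := by
  have hgrowth : Tendsto (fun x => exp (c * x) / x) atTop atTop := by
    simpa using tendsto_exp_mul_div_rpow_atTop 1 c hc
  have hprod := tendsto_id.atTop_mul_atTop₀
    (tendsto_atTop_add_const_right _ (-q) (hgrowth.const_mul_atTop hp))
  refine (tendsto_atTop_add_const_right _ r hprod).congr' ?_
  filter_upwards [eventually_gt_atTop 0] with x hx
  simp only [id]
  field_simp
  ring

theorem stmt_13_general (M m φe : ℝ) (hM : 0 < M) (hm : 0 < m)
    (V N f : ℝ → ℝ)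
    (hV : V = fun φ => 3 / 4 * m ^ 2 * M ^ 2 *
      (1 - Real.exp (-(Real.sqrt (2 / 3)) * φ / M)) ^ 2)
    (hN : N = fun φ => (1 / M ^ 2) * ∫ ψ in φe..φ, V ψ / deriv V ψ)
    (hf : f = fun φ => deriv V φ ^ 2 / V φ * Real.exp (2 * N φ)) :
    Tendsto f atTop atTop := by
  set c := √(2 / 3) / M
  set A := 3 / 4 * m ^ 2 * M ^ 2
  have hc : 0 < c := by positivity
  have hA : 0 < A := by positivity
  have hVA : V = starobinskyPot A c := by
    rw [hV]
    funext φ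
    rw [starobinskyPot, neg_mul, neg_div, mul_div_right_comm]
  subst hVA
  have hf_eq : ∀ φ > 0, f φ = 4 * A * c ^ 2 * exp (1 / (c ^ 2 * M ^ 2) * exp (c * φ) -
      (1 / (c * M ^ 2) + 2 * c) * φ + (φe / (c * M ^ 2) - exp (c * φe) / (c ^ 2 * M ^ 2))) := by
    intro φ hφ
    rw [hf, hN]
    beta_reduce
    rw [starobinskyPot.deriv_sq_div hA.ne' (by positivity),
      starobinskyPot.integral_div_deriv hA.ne' hc.ne', mul_assoc, ← exp_add]
    congr 2
    field_simp
    ring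
  have hexponent := tendsto_mul_exp_sub_mul_add_atTop (p := 1 / (c ^ 2 * M ^ 2)) (by positivity) hc
    (1 / (c * M ^ 2) + 2 * c) (φe / (c * M ^ 2) - exp (c * φe) / (c ^ 2 * M ^ 2))
  refine ((tendsto_exp_atTop.comp hexponent).const_mul_atTop
    (by positivity : 0 < 4 * A * c ^ 2)).congr' ?_
  filter_upwards [eventually_gt_atTop 0] with φ hφ
  exact (hf_eq φ hφ).symm

/-- For the Starobinsky potential
`V φ = (3/4) m² M² (1 - e^{-√(2/3) φ/M})²`, with e-folding number
`N φ = (1/M²) ∫_{φe}^{φ} V/V'` and `f φ = (V'(φ)²/V φ) e^{2 N φ}`, the key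
extendibility quantity diverges: `f φ → +∞` as `φ → +∞`. Hence the Starobinsky
inflationary spacetime has a `C⁰` parallely propagated curvature singularity at
its past boundary. -/
theorem stmt_13 (M m φe : ℝ) (hM : 0 < M) (hm : 0 < m) (hφe : 0 < φe)
    (V N f : ℝ → ℝ)
    (hV : V = fun φ => 3 / 4 * m ^ 2 * M ^ 2 *
      (1 - Real.exp (-(Real.sqrt (2 / 3)) * φ / M)) ^ 2)
    (hN : N = fun φ => (1 / M ^ 2) * ∫ ψ in φe..φ, V ψ / deriv V ψ)
    (hf : f = fun φ => deriv V φ ^ 2 / V φ * Real.exp (2 * N φ)) :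
    Tendsto f atTop atTop :=
  stmt_13_general M m φe hM hm V N f hV hN hf
end

section
/- Let $M, m, V_0 > 0$ and $0 < \varphi_e < 2m$. Define the small-field potential $V(\varphi) = V_0\big(1 - (\varphi/2m)^2\big)^2$ for $\varphi \in (0, 2m)$, the e-folding number $\mathcal{N}(\varphi) = \dfrac{1}{M^2}\int_{\varphi_e}^{\varphi} \dfrac{V(\psi)}{V'(\psi)}\, d\psi = -\dfrac{m^2}{M^2}\ln\dfrac{\varphi}{\varphi_e} + \dfrac{\varphi^2 - \varphi_e^2}{8 M^2}$, and $f(\varphi) = \dfrac{V'(\varphi)^2}{V(\varphi)}\, e^{2\mathcal{N}(\varphi)} = \dfrac{V_0}{m^4}\, \varphi^2 \Big(\dfrac{\varphi}{\varphi_e}\Big)^{-2m^2/M^2} e^{(\varphi^2 - \varphi_e^2)/(4M^2)}$. Then $\lim_{\varphi \to 0^+} f(\varphi)$ exists and is finite if and only if $m \leq M$. (Hence, for $m \leq M$, small field inflation starting from the infinite past is continuously extendible beyond its past boundary.) -/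
open Real Filter MeasureTheory Set intervalIntegral Topology

/-! For the small-field potential `V / V' = -m² / φ + φ / 4`, so `N` integrates to a logarithm
plus a quadratic, and `f φ = φ ^ (2 - 2m²/M²) · g φ` with `g` continuous and positive at `0`.
Such a product has a finite limit at `0⁺` exactly when the exponent is nonnegative, i.e. when
`m ≤ M`; for `m > M` it blows up like a negative power. -/

theorem exists_tendsto_rpow_mul_nhdsGT_zero_iff {g : ℝ → ℝ} {p c : ℝ}
    (hg : Tendsto g (𝓝[>] 0) (𝓝 c)) (hc : 0 < c) :
    (∃ L, Tendsto (fun x => x ^ p * g x) (𝓝[>] 0) (𝓝 L)) ↔ 0 ≤ p := by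
  constructor
  · rintro ⟨L, hL⟩
    by_contra! hp
    exact not_tendsto_atTop_of_tendsto_nhds hL
      ((tendsto_rpow_neg_nhdsGT_zero hp).atTop_mul_pos hc hg)
  · intro hp
    have hpow : ContinuousAt (fun x : ℝ => x ^ p) 0 :=
      continuousAt_rpow_const 0 p (Or.inr hp)
    exact ⟨_, (hpow.tendsto.mono_left nhdsWithin_le_nhds).mul hg⟩

theorem integral_neg_const_div_add_div_four (c : ℝ) {a b : ℝ} (ha : 0 < a) (hb : 0 < b) :
    ∫ x in a..b, (-c / x + x / 4) = -c * log (b / a) + (b ^ 2 - a ^ 2) / 8 := by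
  have h0 : ∀ x ∈ uIcc a b, x ≠ 0 := fun x hx => ((lt_min ha hb).trans_le hx.1).ne'
  have hinv : IntervalIntegrable (fun x : ℝ => -c / x) volume a b :=
    (continuousOn_const.div continuousOn_id h0).intervalIntegrable
  rw [integral_add hinv (intervalIntegrable_id.div_const 4), intervalIntegral.integral_div,
    integral_id]
  simp_rw [div_eq_mul_inv (-c)]
  rw [intervalIntegral.integral_const_mul, integral_inv_of_pos ha hb]
  ring

theorem sq_mul_div_rpow_neg {x y : ℝ} (hx : 0 < x) (hy : 0 < y) (a : ℝ) :
    x ^ 2 * (x / y) ^ (-a) = x ^ (2 - a) * y ^ a := by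
  rw [div_rpow hx.le hy.le, rpow_neg hy.le, div_inv_eq_mul, rpow_sub hx, rpow_neg hx.le]
  norm_cast
  field_simp

noncomputable def smallFieldPotential (V0 m φ : ℝ) : ℝ := V0 * (1 - (φ / (2 * m)) ^ 2) ^ 2

section SmallFieldPotential

variable {V0 m φ : ℝ}

theorem hasDerivAt_smallFieldPotential (hm : m ≠ 0) :
    HasDerivAt (smallFieldPotential V0 m) (-(V0 * φ / m ^ 2) * (1 - (φ / (2 * m)) ^ 2)) φ := by
  have h := ((((hasDerivAt_id' φ).div_const (2 * m)).pow 2).const_sub 1).pow 2 |>.const_mul V0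
  refine h.congr_deriv ?_
  simp only [Pi.pow_apply, Nat.cast_ofNat, Nat.add_one_sub_one, pow_one]
  field_simp

theorem one_sub_sq_div_pos (hφ : φ ∈ Ioo 0 (2 * m)) : 0 < 1 - (φ / (2 * m)) ^ 2 := by
  have h2m : 0 < 2 * m := hφ.1.trans hφ.2
  have hlt : φ / (2 * m) < 1 := (div_lt_one h2m).mpr hφ.2
  have hpos : 0 < φ / (2 * m) := div_pos hφ.1 h2m
  nlinarith

theorem smallFieldPotential_div_deriv (hV0 : V0 ≠ 0) (hm : m ≠ 0) (hφ : φ ≠ 0) :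
    smallFieldPotential V0 m φ / deriv (smallFieldPotential V0 m) φ = -m ^ 2 / φ + φ / 4 := by
  rw [(hasDerivAt_smallFieldPotential hm).deriv, smallFieldPotential]
  field_simp
  ring

theorem deriv_sq_div_smallFieldPotential (hV0 : V0 ≠ 0) (hm : m ≠ 0)
    (hu : 1 - (φ / (2 * m)) ^ 2 ≠ 0) :
    deriv (smallFieldPotential V0 m) φ ^ 2 / smallFieldPotential V0 m φ = V0 / m ^ 4 * φ ^ 2 := by
  have hV : smallFieldPotential V0 m φ ≠ 0 := mul_ne_zero hV0 (pow_ne_zero 2 hu)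
  rw [div_eq_iff hV, (hasDerivAt_smallFieldPotential hm).deriv, smallFieldPotential]
  field_simp

theorem integral_smallFieldPotential_div_deriv (hV0 : V0 ≠ 0) {φe : ℝ}
    (hφe : φe ∈ Ioo 0 (2 * m)) (hφ : φ ∈ Ioo 0 (2 * m)) :
    ∫ ψ in φe..φ, smallFieldPotential V0 m ψ / deriv (smallFieldPotential V0 m) ψ =
      -m ^ 2 * log (φ / φe) + (φ ^ 2 - φe ^ 2) / 8 := by
  have hm : m ≠ 0 := (by linarith [hφ.1, hφ.2] : 0 < m).ne'
  rw [← integral_neg_const_div_add_div_four _ hφe.1 hφ.1]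
  refine integral_congr fun ψ hψ => ?_
  have hψ := ordConnected_Ioo.uIcc_subset hφe hφ hψ
  exact smallFieldPotential_div_deriv hV0 hm hψ.1.ne'

end SmallFieldPotential

/-- For the small-field (Higgs-like) potential
`V φ = V0 (1 - (φ/2m)²)²` on `(0, 2m)`, with e-folding number
`N φ = (1/M²) ∫_{φe}^{φ} V/V'` and `f φ = (V'(φ)²/V φ) e^{2 N φ}`:
`N` has the stated closed form, `f` has the stated closed form, and `f` has a
finite limit as `φ → 0⁺` if and only if `m ≤ M`. Hence, for `m ≤ M`, small field
inflation starting from the infinite past is continuously extendible beyond its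
past boundary. -/
theorem stmt_14 (M m V0 φe : ℝ) (hM : 0 < M) (hm : 0 < m) (hV0 : 0 < V0)
    (hφe : 0 < φe) (hφe2 : φe < 2 * m)
    (V N f : ℝ → ℝ)
    (hV : V = fun φ => V0 * (1 - (φ / (2 * m)) ^ 2) ^ 2)
    (hN : N = fun φ => (1 / M ^ 2) * ∫ ψ in φe..φ, V ψ / deriv V ψ)
    (hf : f = fun φ => deriv V φ ^ 2 / V φ * Real.exp (2 * N φ)) :
    (∀ φ ∈ Ioo (0 : ℝ) (2 * m),
      N φ = -(m ^ 2 / M ^ 2) * Real.log (φ / φe) + (φ ^ 2 - φe ^ 2) / (8 * M ^ 2)) ∧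
    (∀ φ ∈ Ioo (0 : ℝ) (2 * m),
      f φ = V0 / m ^ 4 * φ ^ 2 * (φ / φe) ^ (-(2 * m ^ 2 / M ^ 2)) *
        Real.exp ((φ ^ 2 - φe ^ 2) / (4 * M ^ 2))) ∧
    ((∃ L : ℝ, Tendsto f (nhdsWithin 0 (Ioi 0)) (nhds L)) ↔ m ≤ M) := by
  obtain rfl : V = smallFieldPotential V0 m := hV
  have hNφ (φ : ℝ) (hφ : φ ∈ Ioo 0 (2 * m)) :
      N φ = -(m ^ 2 / M ^ 2) * log (φ / φe) + (φ ^ 2 - φe ^ 2) / (8 * M ^ 2) := by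
    rw [hN]
    dsimp only
    rw [integral_smallFieldPotential_div_deriv hV0.ne' ⟨hφe, hφe2⟩ hφ]
    field_simp
  have hfφ (φ : ℝ) (hφ : φ ∈ Ioo 0 (2 * m)) :
      f φ = V0 / m ^ 4 * φ ^ 2 * (φ / φe) ^ (-(2 * m ^ 2 / M ^ 2)) *
        exp ((φ ^ 2 - φe ^ 2) / (4 * M ^ 2)) := by
    rw [hf]
    dsimp only
    rw [deriv_sq_div_smallFieldPotential hV0.ne' hm.ne' (one_sub_sq_div_pos hφ).ne', hNφ φ hφ,
      rpow_def_of_pos (div_pos hφ.1 hφe), mul_assoc _ (exp _), ← exp_add]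
    field_simp
    ring_nf
  refine ⟨hNφ, hfφ, ?_⟩
  set a := 2 * m ^ 2 / M ^ 2
  set g : ℝ → ℝ := fun φ => V0 / m ^ 4 * φe ^ a * exp ((φ ^ 2 - φe ^ 2) / (4 * M ^ 2))
  have hfg : f =ᶠ[𝓝[>] 0] fun φ => φ ^ (2 - a) * g φ := by
    filter_upwards [Ioo_mem_nhdsGT (by linarith : (0 : ℝ) < 2 * m)] with φ hφ
    rw [hfφ φ hφ, mul_assoc (V0 / m ^ 4), sq_mul_div_rpow_neg hφ.1 hφe]
    ring
  have hg : Tendsto g (𝓝[>] 0) (𝓝 (g 0)) :=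
    ((by fun_prop : Continuous g).tendsto 0).mono_left nhdsWithin_le_nhds
  rw [exists_congr fun L => tendsto_congr' hfg,
    exists_tendsto_rpow_mul_nhdsGT_zero_iff hg (by positivity), sub_nonneg,
    div_le_iff₀ (by positivity), mul_le_mul_iff_right₀ two_pos,
    pow_le_pow_iff_left₀ hm.le hM.le two_ne_zero]
end

section
/- Let $H_\Lambda > 0$. Define, for $t_g \in \mathbb{R}$ and $\psi \in (0, \pi)$, $\lambda(t_g, \psi) = \dfrac{1}{H_\Lambda^2}\big(\cosh(H_\Lambda t_g)\cos\psi + \sinh(H_\Lambda t_g)\big)$ and $v(t_g, \psi) = -\dfrac{1 - e^{H_\Lambda t_g} \tan(\psi/2)}{e^{H_\Lambda t_g} + \tan(\psi/2)}$. Then the following identities hold for all $t_g \in \mathbb{R}$ and $\psi \in (0,\pi)$: (i) $-2\, \partial_{t_g}\lambda\; \partial_{t_g}v + H_\Lambda^2 \lambda^2 (\partial_{t_g}v)^2 = -1$; (ii) $-\,(\partial_{t_g}\lambda\; \partial_{\psi}v + \partial_{\psi}\lambda\; \partial_{t_g}v) + H_\Lambda^2 \lambda^2\, \partial_{t_g}v\;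 \partial_{\psi}v = 0$; (iii) $-2\, \partial_{\psi}\lambda\; \partial_{\psi}v + H_\Lambda^2 \lambda^2 (\partial_{\psi}v)^2 = \dfrac{\cosh^2(H_\Lambda t_g)}{H_\Lambda^2}$; (iv) $\big(1 + H_\Lambda^2\, \lambda\, v\big)^2 = \cosh^2(H_\Lambda t_g)\, \sin^2\psi$. -/
/-!
In the variables `E = exp (HΛ t_g)` and `T = tan (ψ / 2)` everything is rational:
`cosh`, `sinh` are `(E ± E⁻¹) / 2`, the half-angle formulas give `cos ψ = (1 - T²) / (1 + T²)`
and `sin ψ = 2T / (1 + T²)`, and `v = (ET - 1) / (E + T)` is a Möbius map in each variable,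
symmetric in `E` and `T`, with `∂v/∂E = (1 + T²) / (E + T)²`. By the chain rule
(`dE/dt_g = HΛ E`, `dT/dψ = (1 + T²) / 2`) the four identities become identities between
rational functions of `E` and `T`.
-/

open Real Set

lemma hasDerivAt_tan_half {ψ : ℝ} (h : cos (ψ / 2) ≠ 0) :
    HasDerivAt (fun x => tan (x / 2)) ((1 + tan (ψ / 2) ^ 2) / 2) ψ := by
  refine ((hasDerivAt_tan h).comp ψ ((hasDerivAt_id ψ).div_const 2)).congr_deriv ?_
  rw [one_div, ← inv_one_add_tan_sq h, inv_inv]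
  ring

lemma hasDerivAt_neg_one_sub_mul_div_add {a x : ℝ} (h : x + a ≠ 0) :
    HasDerivAt (fun e => -(1 - e * a) / (e + a)) ((1 + a ^ 2) / (x + a) ^ 2) x := by
  refine ((((hasDerivAt_id x).mul_const a).const_sub 1).neg.div
    ((hasDerivAt_id x).add_const a) h).congr_deriv ?_
  simp only [one_mul, neg_neg, id_eq, Pi.neg_apply, neg_sub, mul_one]
  ring

section DeSitterCoordinates

variable {H : ℝ}

lemma hasDerivAt_lam_time (hH : H ≠ 0) (ψ t : ℝ) :
    HasDerivAt (fun s => 1 / H ^ 2 * (cosh (H * s) * cos ψ + sinh (H * s)))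
      ((sinh (H * t) * cos ψ + cosh (H * t)) / H) t := by
  have hHt : HasDerivAt (fun s => H * s) H t := hasDerivAt_const_mul H
  refine (((((hasDerivAt_cosh _).comp t hHt).mul_const (cos ψ)).add
    ((hasDerivAt_sinh _).comp t hHt)).const_mul (1 / H ^ 2)).congr_deriv ?_
  field_simp

lemma hasDerivAt_lam_angle (t ψ : ℝ) :
    HasDerivAt (fun x => 1 / H ^ 2 * (cosh (H * t) * cos x + sinh (H * t)))
      (-(cosh (H * t) * sin ψ) / H ^ 2) ψ := by
  refine ((((hasDerivAt_cos ψ).const_mul (cosh (H * t))).add_const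
    (sinh (H * t))).const_mul (1 / H ^ 2)).congr_deriv ?_
  ring

lemma hasDerivAt_v_time {T t : ℝ} (h : exp (H * t) + T ≠ 0) :
    HasDerivAt (fun s => -(1 - exp (H * s) * T) / (exp (H * s) + T))
      (H * exp (H * t) * (1 + T ^ 2) / (exp (H * t) + T) ^ 2) t := by
  refine ((hasDerivAt_neg_one_sub_mul_div_add h).comp t
    ((hasDerivAt_exp _).comp t (hasDerivAt_const_mul H))).congr_deriv ?_
  ring

lemma hasDerivAt_v_angle {E ψ : ℝ} (hcos : cos (ψ / 2) ≠ 0) (h : E + tan (ψ / 2) ≠ 0) :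
    HasDerivAt (fun x => -(1 - E * tan (x / 2)) / (E + tan (x / 2)))
      ((1 + E ^ 2) * (1 + tan (ψ / 2) ^ 2) / (2 * (E + tan (ψ / 2)) ^ 2)) ψ := by
  have hsymm : (fun x => -(1 - E * tan (x / 2)) / (E + tan (x / 2))) =
      (fun e => -(1 - e * E) / (e + E)) ∘ fun x => tan (x / 2) := by
    ext x
    simp only [Function.comp, mul_comm, add_comm]
  rw [hsymm]
  refine ((hasDerivAt_neg_one_sub_mul_div_add (by rwa [add_comm])).comp ψ
    (hasDerivAt_tan_half hcos)).congr_deriv ?_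
  rw [add_comm (tan _) E]
  field_simp

end DeSitterCoordinates

/-- The coordinate transformation from global de Sitter coordinates
`(t_g, ψ)` to the null coordinates `(lam, v)`,
`lam = (cosh (HΛ t_g) cos ψ + sinh (HΛ t_g)) / HΛ²`,
`v = -(1 - e^{HΛ t_g} tan (ψ/2)) / (e^{HΛ t_g} + tan (ψ/2))`,
pulls back the extended metric `-2 dλ dv + HΛ² λ² dv² + HΛ⁻²(1 + HΛ² λ v)² dΩ²`
to the global de Sitter metric
`-dt_g² + HΛ⁻² cosh²(HΛ t_g)(dψ² + sin²ψ dΩ²)`: identities (i)–(iv). -/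
theorem stmt_16 (HΛ : ℝ) (hHΛ : 0 < HΛ)
    (lam v : ℝ → ℝ → ℝ)
    (hlam : lam = fun tg ψ =>
      (1 / HΛ ^ 2) * (Real.cosh (HΛ * tg) * Real.cos ψ + Real.sinh (HΛ * tg)))
    (hv : v = fun tg ψ =>
      -(1 - Real.exp (HΛ * tg) * Real.tan (ψ / 2)) /
        (Real.exp (HΛ * tg) + Real.tan (ψ / 2))) :
    ∀ tg : ℝ, ∀ ψ ∈ Ioo (0 : ℝ) Real.pi,
      (-2 * deriv (fun s => lam s ψ) tg * deriv (fun s => v s ψ) tg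
        + HΛ ^ 2 * lam tg ψ ^ 2 * (deriv (fun s => v s ψ) tg) ^ 2 = -1) ∧
      (-(deriv (fun s => lam s ψ) tg * deriv (fun x => v tg x) ψ
          + deriv (fun x => lam tg x) ψ * deriv (fun s => v s ψ) tg)
        + HΛ ^ 2 * lam tg ψ ^ 2 * deriv (fun s => v s ψ) tg
          * deriv (fun x => v tg x) ψ = 0) ∧
      (-2 * deriv (fun x => lam tg x) ψ * deriv (fun x => v tg x) ψ
        + HΛ ^ 2 * lam tg ψ ^ 2 * (deriv (fun x => v tg x) ψ) ^ 2
        = Real.cosh (HΛ * tg) ^ 2 / HΛ ^ 2) ∧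
      ((1 + HΛ ^ 2 * lam tg ψ * v tg ψ) ^ 2
        = Real.cosh (HΛ * tg) ^ 2 * Real.sin ψ ^ 2) := by
  subst hlam hv
  rintro tg ψ ⟨hψ0, hψπ⟩
  have hcos : 0 < cos (ψ / 2) := cos_pos_of_mem_Ioo ⟨by linarith [pi_pos], by linarith⟩
  have hT : 0 < tan (ψ / 2) := tan_pos_of_pos_of_lt_pi_div_two (by linarith) (by linarith)
  have hE : 0 < exp (HΛ * tg) := exp_pos _
  have hET : exp (HΛ * tg) + tan (ψ / 2) ≠ 0 := by positivity
  have hcosψ : cos ψ ≠ -1 := fun h => by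
    nlinarith [sin_sq_add_cos_sq ψ, sin_pos_of_pos_of_lt_pi hψ0 hψπ]
  beta_reduce
  rw [(hasDerivAt_lam_time hHΛ.ne' ψ tg).deriv, (hasDerivAt_lam_angle tg ψ).deriv,
    (hasDerivAt_v_time hET).deriv, (hasDerivAt_v_angle hcos.ne' hET).deriv,
    cos_eq_two_mul_tan_half_div_one_sub_tan_half_sq ψ hcosψ,
    sin_eq_two_mul_tan_half_div_one_add_tan_half_sq ψ, cosh_eq, sinh_eq, exp_neg]
  generalize exp (HΛ * tg) = E at *
  generalize tan (ψ / 2) = T at *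
  have hH := hHΛ.ne'
  refine ⟨?_, ?_, ?_, ?_⟩ <;> field_simp <;> ring
end
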